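/- Suppose for each coordinate γ ∈ Γ an online algorithm's forecasts ŷ_t^γ satisfy the regret bound ∑_{t=1}^T (y_t^γ − ŷ_t^γ)² − ∑_{t=1}^T (y_t^γ − u^γ·x_t)² ≤ B_γ for every comparison vector u^γ. If the true vectors y_t lie in the kernel of a matrix K, and the projected forecasts are ỹ_t = Π_K(ŷ_t) where Π_K is the orthogonal projection onto Ker(K), then for any matrix U = (u^1 | … | u^{|Γ|}) with Im(Uᵀ) ⊆ Ker(K), the total regret satisfies ∑_{t=1}^T ‖y_t − ỹ_t‖² − ∑_{t=1}^T ‖y_t − Uᵀx_t‖² ≤ ∑_{γ∈Γ} B_γ. -/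

import Mathlib

/-!
Since `y t ∈ V`, the error `y t - ỹ t` is the projection of `y t - ŷ t`, so projecting never
increases the loss. The squared Euclidean loss is the sum of the coordinate losses, and the
coordinate regret bounds apply with `u^γ` the `γ`-th column of `U`.
-/

theorem Submodule.norm_sub_starProjection_le_of_mem {𝕜 E : Type*} [RCLike 𝕜]
    [NormedAddCommGroup E] [InnerProductSpace 𝕜 E] (K : Submodule 𝕜 E)
    [K.HasOrthogonalProjection] {v : E} (hv : v ∈ K) (w : E) :
    ‖v - K.starProjection w‖ ≤ ‖v - w‖ := by
  conv_lhs => rw [← K.starProjection_eq_self_iff.2 hv, ← map_sub]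
  exact K.norm_starProjection_apply_le _

theorem EuclideanSpace.sum_norm_sq_eq_sum_sum {ι n : Type*} [Fintype ι] [Fintype n]
    (a : ι → EuclideanSpace ℝ n) :
    ∑ t, ‖a t‖ ^ 2 = ∑ γ, ∑ t, (a t γ) ^ 2 := by
  simp only [EuclideanSpace.real_norm_sq_eq]
  exact Finset.sum_comm

theorem EuclideanSpace.sum_norm_sq_sub_le_of_forall_coord {ι n : Type*} [Fintype ι]
    [Fintype n] (y f g : ι → EuclideanSpace ℝ n) (B : n → ℝ)
    (h : ∀ γ, ∑ t, (y t γ - f t γ) ^ 2 - ∑ t, (y t γ - g t γ) ^ 2 ≤ B γ) :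
    ∑ t, ‖y t - f t‖ ^ 2 - ∑ t, ‖y t - g t‖ ^ 2 ≤ ∑ γ, B γ := by
  rw [sum_norm_sq_eq_sum_sum, sum_norm_sq_eq_sum_sum, ← Finset.sum_sub_distrib]
  exact Finset.sum_le_sum fun γ _ => by simpa only [PiLp.sub_apply] using h γ

theorem stmt_1_general {Γ : Type*} [Fintype Γ]
    (T : ℕ)
    (V : Submodule ℝ (EuclideanSpace ℝ Γ))
    (y x yhat : Fin T → EuclideanSpace ℝ Γ)
    (hy : ∀ t, y t ∈ V)
    (ytilde : Fin T → EuclideanSpace ℝ Γ)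
    (htilde : ∀ t, ytilde t = (V.orthogonalProjectionOnto (yhat t) : EuclideanSpace ℝ Γ))
    (B : Γ → ℝ)
    (hreg : ∀ γ : Γ, ∀ u : Γ → ℝ,
      (∑ t, (y t γ - yhat t γ) ^ 2) - (∑ t, (y t γ - ∑ i, u i * x t i) ^ 2) ≤ B γ)
    (U : Matrix Γ Γ ℝ) :
    (∑ t, ‖y t - ytilde t‖ ^ 2)
      - (∑ t, ‖y t -
          (WithLp.equiv 2 (Γ → ℝ)).symm (Matrix.mulVec U.transpose (fun i => x t i))‖ ^ 2)
      ≤ ∑ γ, B γ := by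
  set c : Fin T → EuclideanSpace ℝ Γ := fun t =>
    (WithLp.equiv 2 (Γ → ℝ)).symm (Matrix.mulVec U.transpose (fun i => x t i))
  have hc : ∀ t γ, c t γ = ∑ i, U i γ * x t i := fun t γ => by
    simp [c, Matrix.mulVec, dotProduct]
  have hproj : ∀ t, ‖y t - ytilde t‖ ≤ ‖y t - yhat t‖ := fun t => by
    rw [htilde, ← Submodule.starProjection_apply]
    exact V.norm_sub_starProjection_le_of_mem (hy t) (yhat t)
  calc ∑ t, ‖y t - ytilde t‖ ^ 2 - ∑ t, ‖y t - c t‖ ^ 2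
      ≤ ∑ t, ‖y t - yhat t‖ ^ 2 - ∑ t, ‖y t - c t‖ ^ 2 := by
        gcongr with t; exact hproj t
    _ ≤ ∑ γ, B γ :=
        EuclideanSpace.sum_norm_sq_sub_le_of_forall_coord y yhat c B fun γ => by
          simpa only [hc] using hreg γ (fun i => U i γ)

open Finset in
/-- Reconciliation theorem: if each per-coordinate regret is bounded by `B γ`, the true
vectors lie in `Ker K`, and forecasts are orthogonally projected onto `Ker K`, then the
total regret against any matrix `U` with `Im Uᵀ ⊆ Ker K` is at most `∑ γ, B γ`. -/
theorem stmt_1 {Γ m : Type*} [Fintype Γ] [DecidableEq Γ] [Fintype m]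
    (T : ℕ) (K : Matrix m Γ ℝ)
    (V : Submodule ℝ (EuclideanSpace ℝ Γ))
    (hV : ∀ v : EuclideanSpace ℝ Γ, v ∈ V ↔ K.mulVec (fun i => v i) = 0)
    (y x yhat : Fin T → EuclideanSpace ℝ Γ)
    (hy : ∀ t, y t ∈ V)
    (ytilde : Fin T → EuclideanSpace ℝ Γ)
    (htilde : ∀ t, ytilde t = (V.orthogonalProjectionOnto (yhat t) : EuclideanSpace ℝ Γ))
    (B : Γ → ℝ)
    (hreg : ∀ γ : Γ, ∀ u : Γ → ℝ,
      (∑ t, (y t γ - yhat t γ) ^ 2) - (∑ t, (y t γ - ∑ i, u i * x t i) ^ 2) ≤ B γ)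
    (U : Matrix Γ Γ ℝ)
    (hU : ∀ z : Γ → ℝ,
      (WithLp.equiv 2 (Γ → ℝ)).symm (Matrix.mulVec U.transpose z) ∈ V) :
    (∑ t, ‖y t - ytilde t‖ ^ 2)
      - (∑ t, ‖y t -
          (WithLp.equiv 2 (Γ → ℝ)).symm (Matrix.mulVec U.transpose (fun i => x t i))‖ ^ 2)
      ≤ ∑ γ, B γ :=
  stmt_1_general T V y x yhat hy ytilde htilde B hreg U
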